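/- arXiv:1006.3300 — 3 statements merged into one kernel-verified Lean document; each statement's English description precedes it below -/
import Mathlib

section
/- The coefficient α(2,2,2) in the Potts GHS expansion equals r^{3n−6}(2r⁴ + 6r³ − 28r² + 8r + 12), and the polynomial 2r⁴ + 6r³ − 28r² + 8r + 12 is ≤ 0 at r = 2 and ≥ 0 for every integer r ≥ 3. -/
theorem alpha_222 (r n : ℕ) (hr : 2 ≤ r) (hn : 2 ≤ n) :
    let S : ℝ := (r:ℝ)^(3*n-4) * (-3*(r:ℝ)+3)
      + (r:ℝ)^(3*n-5) * (-2*(r:ℝ)+2)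
      + (r:ℝ)^(3*n-5) * (-2*(r:ℝ)+2)
      + (r:ℝ)^(3*n-5) * (-2*(r:ℝ)+2)
      + (r:ℝ)^(3*n-4) * ((r:ℝ)-1)
      + (r:ℝ)^(3*n-6) * ((r:ℝ)^2-3*(r:ℝ)+2)
      + (r:ℝ)^(3*n-5) * (-2*(r:ℝ)+2)
      + (r:ℝ)^(3*n-6) * ((r:ℝ)^2-3*(r:ℝ)+2)
      + (r:ℝ)^(3*n-5) * ((r:ℝ)^2-3*(r:ℝ)+2)
      + (r:ℝ)^(3*n-5) * (-2*(r:ℝ)+2)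
      + (r:ℝ)^(3*n-4) * ((r:ℝ)-1)
      + (r:ℝ)^(3*n-6) * ((r:ℝ)^2-3*(r:ℝ)+2)
      + (r:ℝ)^(3*n-4) * ((r:ℝ)-1)
      + (r:ℝ)^(3*n-5) * ((r:ℝ)^3-3*(r:ℝ)+2)
      + (r:ℝ)^(3*n-4) * ((r:ℝ)-1)
      + (r:ℝ)^(3*n-6) * ((r:ℝ)^2-3*(r:ℝ)+2)
      + (r:ℝ)^(3*n-4) * ((r:ℝ)-1)
      + (r:ℝ)^(3*n-5) * ((r:ℝ)^2-3*(r:ℝ)+2)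
      + (r:ℝ)^(3*n-5) * (-2*(r:ℝ)+2)
      + (r:ℝ)^(3*n-6) * ((r:ℝ)^2-3*(r:ℝ)+2)
      + (r:ℝ)^(3*n-5) * ((r:ℝ)^2-3*(r:ℝ)+2)
      + (r:ℝ)^(3*n-6) * ((r:ℝ)^2-3*(r:ℝ)+2)
      + (r:ℝ)^(3*n-4) * ((r:ℝ)-1)
      + (r:ℝ)^(3*n-5) * ((r:ℝ)^2-3*(r:ℝ)+2)
      + (r:ℝ)^(3*n-5) * ((r:ℝ)^2-3*(r:ℝ)+2)
      + (r:ℝ)^(3*n-5) * ((r:ℝ)^2-3*(r:ℝ)+2)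
      + (r:ℝ)^(3*n-4) * ((r:ℝ)^2-3*(r:ℝ)+2)
    S = (r : ℝ)^(3*n-6) * (2*(r:ℝ)^4 + 6*(r:ℝ)^3 - 28*(r:ℝ)^2 + 8*(r:ℝ) + 12)
      ∧ (2*(2:ℝ)^4 + 6*(2:ℝ)^3 - 28*(2:ℝ)^2 + 8*(2:ℝ) + 12 ≤ 0)
      ∧ (∀ x : ℝ, 3 ≤ x → 0 ≤ 2*x^4 + 6*x^3 - 28*x^2 + 8*x + 12) := by
  intro S
  refine ⟨?_, by norm_num, ?_⟩
  · obtain ⟨m, rfl⟩ : ∃ m, n = m + 2 := ⟨n - 2, by omega⟩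
    have h4 : 3 * (m + 2) - 4 = 3 * m + 2 := by omega
    have h5 : 3 * (m + 2) - 5 = 3 * m + 1 := by omega
    have h6 : 3 * (m + 2) - 6 = 3 * m := by omega
    simp only [S, h4, h5, h6, pow_add, pow_succ]
    ring
  · intro x hx
    nlinarith [sq_nonneg (x - 3), sq_nonneg (x * (x - 3)), sq_nonneg x, mul_nonneg (sq_nonneg x) (sub_nonneg.2 hx)]
end

section
/- For r = 2 and all nonnegative X₁, X₂, X₃, the polynomial P(X₁,X₂,X₃) = Σ_{0≤x,y,z≤3} α(x,y,z) X₁^x X₂^y X₃^z with the coefficients α(x,y,z) from the Potts GHS expansion (evaluated at r = 2, n fixed) satisfies P(X₁,X₂,X₃) ≤ 0; for integer r ≥ 3 and all nonnegative X₁, X₂, X₃ it satisfies P(X₁,X₂,X₃) ≥ 0. -/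
open Finset

noncomputable def pottsAlpha (r : ℝ) (n : ℕ) (x y z : ℕ) : ℝ :=
  let s : Multiset ℕ := {x, y, z}
  if s = {3, 3, 3} ∨ s = {3, 3, 0} then r^(3*n-6) * (r^2 - 3*r + 2)
  else if s = {3, 3, 2} ∨ s = {3, 3, 1} then 3 * r^(3*n-6) * (r^2 - 3*r + 2)
  else if s = {3, 2, 2} then r^(3*n-6) * (2*r^3 - 15*r + 12)
  else if s = {3, 2, 1} then r^(3*n-6) * (4*r^3 - 9*r^2 - 3*r + 6)
  else if s = {3, 2, 0} then r^(3*n-5) * (2*r^2 - 6*r + 3)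
  else if s = {3, 1, 1} then r^(3*n-5) * (r^3 + r^2 - 10*r + 6)
  else if s = {3, 1, 0} then r^(3*n-4) * (r^2 - 3*r + 2)
  else if s = {2, 2, 2} then r^(3*n-6) * (2*r^4 + 6*r^3 - 28*r^2 + 8*r + 12)
  else if s = {2, 2, 1} then r^(3*n-5) * (5*r^3 - 7*r^2 - 22*r + 24)
  else if s = {2, 2, 0} then r^(3*n-5) * (4*r^3 - 12*r^2 + 6*r + 2)
  else if s = {2, 1, 1} then r^(3*n-5) * (2*r^4 + 3*r^3 - 23*r^2 + 14*r + 4)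
  else if s = {2, 1, 0} then r^(3*n-3) * (2*r^2 - 6*r + 4)
  else if s = {1, 1, 1} then r^(3*n-3) * (r^3 + 3*r^2 - 16*r + 12)
  else if s = {1, 1, 0} then r^(3*n-2) * (r^2 - 3*r + 2)
  else 0

noncomputable def pottsPoly (r : ℝ) (n : ℕ) (X₁ X₂ X₃ : ℝ) : ℝ :=
  ∑ x ∈ Finset.range 4, ∑ y ∈ Finset.range 4, ∑ z ∈ Finset.range 4,
    pottsAlpha r n x y z * X₁^x * X₂^y * X₃^z

set_option maxHeartbeats 1000000 in
lemma pottsAlpha_two_nonpos (n x y z : ℕ) (hx : x < 4) (hy : y < 4) (hz : z < 4) :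
    pottsAlpha 2 n x y z ≤ 0 := by
  interval_cases x <;> interval_cases y <;> interval_cases z <;>
    simp +decide only [pottsAlpha, if_true, if_false] <;>
    first
      | norm_num
      | exact mul_nonpos_iff.mpr (Or.inl ⟨by positivity, by norm_num⟩)

set_option maxHeartbeats 1000000 in
lemma pottsAlpha_nonneg (r : ℝ) (hr : 3 ≤ r) (n x y z : ℕ)
    (hx : x < 4) (hy : y < 4) (hz : z < 4) : 0 ≤ pottsAlpha r n x y z := by
  have hr0 : (0:ℝ) ≤ r := by linarith
  have h3 : (0:ℝ) ≤ r - 3 := by linarith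
  interval_cases x <;> interval_cases y <;> interval_cases z <;>
    simp +decide only [pottsAlpha, if_true, if_false] <;>
    first
      | (refine mul_nonneg (pow_nonneg hr0 _) ?_;
         nlinarith [mul_nonneg h3 h3, mul_nonneg (mul_nonneg h3 h3) h3,
           mul_nonneg (mul_nonneg (mul_nonneg h3 h3) h3) h3, h3, hr0])
      | (refine mul_nonneg (mul_nonneg (by norm_num) (pow_nonneg hr0 _)) ?_;
         nlinarith [mul_nonneg h3 h3, h3, hr0])
      | norm_num

theorem potts_poly_sign (n : ℕ) (hn : 2 ≤ n)
    (X₁ X₂ X₃ : ℝ) (h₁ : 0 ≤ X₁) (h₂ : 0 ≤ X₂) (h₃ : 0 ≤ X₃) :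
    pottsPoly 2 n X₁ X₂ X₃ ≤ 0
      ∧ ∀ r : ℕ, 3 ≤ r → 0 ≤ pottsPoly (r : ℝ) n X₁ X₂ X₃ := by
  constructor
  · unfold pottsPoly
    apply Finset.sum_nonpos; intro x hx
    apply Finset.sum_nonpos; intro y hy
    apply Finset.sum_nonpos; intro z hz
    have ha := pottsAlpha_two_nonpos n x y z (Finset.mem_range.mp hx)
      (Finset.mem_range.mp hy) (Finset.mem_range.mp hz)
    nlinarith [mul_nonneg (pow_nonneg h₁ x) (mul_nonneg (pow_nonneg h₂ y) (pow_nonneg h₃ z)),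
      pow_nonneg h₁ x, pow_nonneg h₂ y, pow_nonneg h₃ z]
  · intro r hr
    have hr' : (3:ℝ) ≤ (r:ℝ) := by exact_mod_cast hr
    unfold pottsPoly
    apply Finset.sum_nonneg; intro x hx
    apply Finset.sum_nonneg; intro y hy
    apply Finset.sum_nonneg; intro z hz
    have ha := pottsAlpha_nonneg (r:ℝ) hr' n x y z (Finset.mem_range.mp hx)
      (Finset.mem_range.mp hy) (Finset.mem_range.mp hz)
    exact mul_nonneg (mul_nonneg (mul_nonneg ha (pow_nonneg h₁ x)) (pow_nonneg h₂ y))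
      (pow_nonneg h₃ z)
end

section
/- For the Ising case r = 2, with a ghost spin σ₀, δ_i = δ(σ₀,σ_i), and ferromagnetic couplings J_{ij} ≥ 0 including J_{0,i} = B_i ≥ 0, the truncated three-point function written in Potts variables, u₃(1,2,3) = <δ₁δ₂δ₃> − <δ₁δ₂><δ₃> − <δ₁δ₃><δ₂> − <δ₂δ₃><δ₁> + 2<δ₁><δ₂><δ₃>, is nonpositive. -/
open Finset

noncomputable def kd {r : ℕ} (x y : Fin r) : ℝ := if x = y then 1 else 0

open Filter

noncomputable def chi (x : Fin 2) : ℝ := if x = 0 then 1 else -1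

abbrev F4 := Fin 2 × Fin 2 × Fin 2 × Fin 2

noncomputable def sP (s : F4) : ℝ := (chi s.1 + chi s.2.1)/2 + (chi s.2.2.1 + chi s.2.2.2)/2
noncomputable def sM (s : F4) : ℝ := (chi s.1 + chi s.2.1)/2 - (chi s.2.2.1 + chi s.2.2.2)/2
noncomputable def sp' (s : F4) : ℝ := (chi s.1 - chi s.2.1)/2 + (chi s.2.2.1 - chi s.2.2.2)/2
noncomputable def sm' (s : F4) : ℝ := (chi s.1 - chi s.2.1)/2 - (chi s.2.2.1 - chi s.2.2.2)/2

theorem musign_aux (a b g d : ℕ) :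
    0 ≤ (-1:ℝ)^b * (
      (2:ℝ)^a * 0^b * 0^g * 0^d + (-2:ℝ)^a * 0^b * 0^g * 0^d
      + 0^a * (2:ℝ)^b * 0^g * 0^d + 0^a * (-2:ℝ)^b * 0^g * 0^d
      + 0^a * 0^b * (2:ℝ)^g * 0^d + 0^a * 0^b * (-2:ℝ)^g * 0^d
      + 0^a * 0^b * 0^g * (2:ℝ)^d + 0^a * 0^b * 0^g * (-2:ℝ)^d
      + ((1:ℝ)^a*1^b*1^g*(-1:ℝ)^d + 1^a*1^b*(-1:ℝ)^g*1^d
        + (-1:ℝ)^a*(-1:ℝ)^b*1^g*(-1:ℝ)^d + (-1:ℝ)^a*(-1:ℝ)^b*(-1:ℝ)^g*1^d)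
      + ((1:ℝ)^a*(-1:ℝ)^b*1^g*1^d + 1^a*(-1:ℝ)^b*(-1:ℝ)^g*(-1:ℝ)^d
        + (-1:ℝ)^a*1^b*1^g*1^d + (-1:ℝ)^a*1^b*(-1:ℝ)^g*(-1:ℝ)^d)) := by
  rcases Nat.even_or_odd b with hb | hb <;> rcases Nat.even_or_odd d with hd | hd
  · rcases Nat.even_or_odd a with ha | ha <;> rcases Nat.even_or_odd g with hg | hg <;>
      simp only [ha.neg_pow, hb.neg_pow, hg.neg_pow, hd.neg_pow, ha.neg_one_pow, hb.neg_one_pow,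
        hg.neg_one_pow, hd.neg_one_pow, one_pow, one_mul, mul_one] <;>
      ring_nf <;> first | positivity | norm_num
  · rcases Nat.even_or_odd a with ha | ha <;> rcases Nat.even_or_odd g with hg | hg <;>
      simp only [ha.neg_pow, hb.neg_pow, hg.neg_pow, hd.neg_pow, ha.neg_one_pow, hb.neg_one_pow,
        hg.neg_one_pow, hd.neg_one_pow, one_pow, one_mul, mul_one, zero_pow hd.pos.ne'] <;>
      ring_nf <;> first | positivity | norm_num
  · rcases Nat.even_or_odd a with ha | ha <;> rcases Nat.even_or_odd g with hg | hg <;>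
      simp only [ha.neg_pow, hb.neg_pow, hg.neg_pow, hd.neg_pow, ha.neg_one_pow, hb.neg_one_pow,
        hg.neg_one_pow, hd.neg_one_pow, one_pow, one_mul, mul_one, zero_pow hb.pos.ne'] <;>
      ring_nf <;> first | positivity | norm_num
  · rcases Nat.even_or_odd a with ha | ha <;> rcases Nat.even_or_odd g with hg | hg <;>
      simp only [ha.neg_pow, hb.neg_pow, hg.neg_pow, hd.neg_pow, ha.neg_one_pow, hb.neg_one_pow,
        hg.neg_one_pow, hd.neg_one_pow, one_pow, one_mul, mul_one, zero_pow hb.pos.ne',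
        zero_pow hd.pos.ne'] <;>
      ring_nf <;> first | positivity | norm_num

set_option maxHeartbeats 1000000 in
theorem musign (a b g d : ℕ) :
    0 ≤ (-1:ℝ)^b * ∑ s : F4, sP s ^ a * sM s ^ b * sp' s ^ g * sm' s ^ d := by
  have hsum : ∑ s : F4, sP s ^ a * sM s ^ b * sp' s ^ g * sm' s ^ d =
      (2:ℝ)^a * 0^b * 0^g * 0^d + (-2:ℝ)^a * 0^b * 0^g * 0^d
      + 0^a * (2:ℝ)^b * 0^g * 0^d + 0^a * (-2:ℝ)^b * 0^g * 0^d
      + 0^a * 0^b * (2:ℝ)^g * 0^d + 0^a * 0^b * (-2:ℝ)^g * 0^d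
      + 0^a * 0^b * 0^g * (2:ℝ)^d + 0^a * 0^b * 0^g * (-2:ℝ)^d
      + ((1:ℝ)^a*1^b*1^g*(-1:ℝ)^d + 1^a*1^b*(-1:ℝ)^g*1^d
        + (-1:ℝ)^a*(-1:ℝ)^b*1^g*(-1:ℝ)^d + (-1:ℝ)^a*(-1:ℝ)^b*(-1:ℝ)^g*1^d)
      + ((1:ℝ)^a*(-1:ℝ)^b*1^g*1^d + 1^a*(-1:ℝ)^b*(-1:ℝ)^g*(-1:ℝ)^d
        + (-1:ℝ)^a*1^b*1^g*1^d + (-1:ℝ)^a*1^b*(-1:ℝ)^g*(-1:ℝ)^d) := by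
    simp only [Fintype.sum_prod_type, Fin.sum_univ_two, sP, sM, sp', sm', chi]
    norm_num
    ring
  rw [hsum]
  exact musign_aux a b g d

section CoreModel
variable {n : ℕ}

noncomputable def mono (α β γ δ : Fin n → ℕ) (y : Fin n → F4) : ℝ :=
  ∏ i, (sP (y i) ^ α i * sM (y i) ^ β i * sp' (y i) ^ γ i * sm' (y i) ^ δ i)

lemma sum_mono_nonpos (α β γ δ : Fin n → ℕ) (hβ : Odd (∑ i, β i)) :
    ∑ y : Fin n → F4, mono α β γ δ y ≤ 0 := by
  have h1 : ∑ y : Fin n → F4, mono α β γ δ y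
      = ∏ i, ∑ s : F4, sP s ^ α i * sM s ^ β i * sp' s ^ γ i * sm' s ^ δ i := by
    rw [Fintype.prod_sum (f := fun (i : Fin n) (s : F4) =>
      sP s ^ α i * sM s ^ β i * sp' s ^ γ i * sm' s ^ δ i)]
    rfl
  rw [h1]
  set μ : Fin n → ℝ := fun i => ∑ s : F4, sP s ^ α i * sM s ^ β i * sp' s ^ γ i * sm' s ^ δ i
  have h2 : ∏ i, μ i = ((-1:ℝ) ^ (∑ i, β i)) * ∏ i, ((-1:ℝ) ^ (β i) * μ i) := by
    rw [Finset.prod_mul_distrib, Finset.prod_pow_eq_pow_sum, ← mul_assoc, ← mul_pow]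
    norm_num
  rw [h2, hβ.neg_one_pow]
  have h3 : 0 ≤ ∏ i, ((-1:ℝ) ^ (β i) * μ i) :=
    Finset.prod_nonneg (fun i _ => musign (α i) (β i) (γ i) (δ i))
  nlinarith

lemma prod_pow_shift (w : Fin n → ℝ) (e : Fin n → ℕ) (j : Fin n) :
    (∏ i, w i ^ (e i + if i = j then 1 else 0)) = w j * ∏ i, w i ^ e i := by
  simp only [pow_add]
  rw [Finset.prod_mul_distrib]
  have : ∀ i : Fin n, w i ^ (if i = j then 1 else 0) = if i = j then w i else 1 := by
    intro i; split <;> simp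
  rw [Finset.prod_congr rfl (fun i _ => this i), Finset.prod_ite_eq']
  simp [mul_comm]

lemma mono_eq (α β γ δ : Fin n → ℕ) (y : Fin n → F4) :
    mono α β γ δ y = (∏ i, sP (y i) ^ α i) * (∏ i, sM (y i) ^ β i) *
      (∏ i, sp' (y i) ^ γ i) * (∏ i, sm' (y i) ^ δ i) := by
  unfold mono
  rw [Finset.prod_mul_distrib, Finset.prod_mul_distrib, Finset.prod_mul_distrib]

lemma sum_ind (e : Fin n → ℕ) (j : Fin n) :
    (∑ i, (e i + if i = j then 1 else 0)) = (∑ i, e i) + 1 := by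
  rw [Finset.sum_add_distrib, Finset.sum_ite_eq']
  simp

noncomputable def Obs (a b c : Fin n) (y : Fin n → F4) : ℝ :=
  (sp' (y a) * sm' (y b) + sm' (y a) * sp' (y b)) * sM (y c)

def GoodW (a b c : Fin n) (W : (Fin n → F4) → ℝ) : Prop :=
  ∀ α β γ δ : Fin n → ℕ, Even (∑ i, β i) →
    ∑ y : Fin n → F4, Obs a b c y * mono α β γ δ y * W y ≤ 0

variable {a b c : Fin n}

lemma goodW_one : GoodW a b c (fun _ => 1) := by
  intro α β γ δ hβ
  have key : ∀ y : Fin n → F4, Obs a b c y * mono α β γ δ y * 1 =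
      mono (α) (fun i => β i + if i = c then 1 else 0)
        (fun i => γ i + if i = a then 1 else 0) (fun i => δ i + if i = b then 1 else 0) y
      + mono (α) (fun i => β i + if i = c then 1 else 0)
        (fun i => γ i + if i = b then 1 else 0) (fun i => δ i + if i = a then 1 else 0) y := by
    intro y
    simp only [mono_eq, prod_pow_shift]
    unfold Obs
    ring
  rw [Finset.sum_congr rfl (fun y _ => key y), Finset.sum_add_distrib]
  have hodd : Odd ((∑ i, β i) + 1) := Even.add_one hβ
  have h1 := sum_mono_nonpos α (fun i => β i + if i = c then 1 else 0)
    (fun i => γ i + if i = a then 1 else 0) (fun i => δ i + if i = b then 1 else 0)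
    (by rw [sum_ind]; exact hodd)
  have h2 := sum_mono_nonpos α (fun i => β i + if i = c then 1 else 0)
    (fun i => γ i + if i = b then 1 else 0) (fun i => δ i + if i = a then 1 else 0)
    (by rw [sum_ind]; exact hodd)
  linarith

lemma goodW_add {W₁ W₂} (h₁ : GoodW a b c W₁) (h₂ : GoodW a b c W₂) :
    GoodW a b c (fun y => W₁ y + W₂ y) := by
  intro α β γ δ hβ
  have := h₁ α β γ δ hβ
  have := h₂ α β γ δ hβ
  have hsplit : ∑ y : Fin n → F4, Obs a b c y * mono α β γ δ y * (W₁ y + W₂ y)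
      = (∑ y : Fin n → F4, Obs a b c y * mono α β γ δ y * W₁ y)
      + ∑ y : Fin n → F4, Obs a b c y * mono α β γ δ y * W₂ y := by
    rw [← Finset.sum_add_distrib]; apply Finset.sum_congr rfl; intro y _; ring
  rw [hsplit]; linarith

lemma goodW_smul {W} (r : ℝ) (hr : 0 ≤ r) (h : GoodW a b c W) :
    GoodW a b c (fun y => r * W y) := by
  intro α β γ δ hβ
  have h1 := h α β γ δ hβ
  have hsplit : ∑ y : Fin n → F4, Obs a b c y * mono α β γ δ y * (r * W y)
      = r * ∑ y : Fin n → F4, Obs a b c y * mono α β γ δ y * W y := by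
    rw [Finset.mul_sum]; apply Finset.sum_congr rfl; intro y _; ring
  rw [hsplit]
  exact mul_nonpos_of_nonneg_of_nonpos hr h1

lemma goodW_sum {κ : Type*} (s : Finset κ) (G : κ → (Fin n → F4) → ℝ)
    (h : ∀ k ∈ s, GoodW a b c (G k)) : GoodW a b c (fun y => ∑ k ∈ s, G k y) := by
  classical
  induction s using Finset.induction_on with
  | empty => intro α β γ δ hβ; simp [GoodW]
  | @insert k s' hk ih =>
    have : GoodW a b c (fun y => G k y + ∑ k' ∈ s', G k' y) :=
      goodW_add (h k (Finset.mem_insert_self k s'))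
        (ih (fun k' hk' => h k' (Finset.mem_insert_of_mem hk')))
    intro α β γ δ hβ
    have h2 := this α β γ δ hβ
    simpa [Finset.sum_insert hk] using h2
end CoreModel

section Factors
variable {n : ℕ}

abbrev Phi (n : ℕ) := ((Fin n × Fin n) × Fin 4) ⊕ Fin n

noncomputable def Xf : Phi n → (Fin n → F4) → ℝ
  | Sum.inl ((i, j), k), y =>
      if k = 0 then sP (y i) * sP (y j)
      else if k = 1 then sM (y i) * sM (y j)
      else if k = 2 then sp' (y i) * sp' (y j)
      else sm' (y i) * sm' (y j)
  | Sum.inr i, y => sP (y i)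

variable {a b c : Fin n}

lemma goodW_mul_PP {W} (i j : Fin n) (h : GoodW a b c W) :
    GoodW a b c (fun y => (sP (y i) * sP (y j)) * W y) := by
  intro α β γ δ hβ
  have h1 := h (fun l => (α l + if l = i then 1 else 0) + if l = j then 1 else 0) β γ δ hβ
  have key : ∀ y : Fin n → F4, Obs a b c y *
      mono (fun l => (α l + if l = i then 1 else 0) + if l = j then 1 else 0) β γ δ y * W y
      = Obs a b c y * mono α β γ δ y * ((sP (y i) * sP (y j)) * W y) := by
    intro y
    simp only [mono_eq, prod_pow_shift]
    ring
  rw [← Finset.sum_congr rfl (fun y _ => key y)]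
  exact h1

lemma goodW_mul_MM {W} (i j : Fin n) (h : GoodW a b c W) :
    GoodW a b c (fun y => (sM (y i) * sM (y j)) * W y) := by
  intro α β γ δ hβ
  have hpar : (∑ l, ((β l + if l = i then 1 else 0) + if l = j then 1 else 0)) = (∑ l, β l) + 2 := by
    rw [Finset.sum_add_distrib, Finset.sum_add_distrib, Finset.sum_ite_eq', Finset.sum_ite_eq']
    simp only [Finset.mem_univ, if_true]
    try omega
  have h1 := h α (fun l => (β l + if l = i then 1 else 0) + if l = j then 1 else 0) γ δ
    (by rw [hpar]; exact hβ.add (by norm_num))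
  have key : ∀ y : Fin n → F4, Obs a b c y *
      mono α (fun l => (β l + if l = i then 1 else 0) + if l = j then 1 else 0) γ δ y * W y
      = Obs a b c y * mono α β γ δ y * ((sM (y i) * sM (y j)) * W y) := by
    intro y
    simp only [mono_eq, prod_pow_shift]
    ring
  rw [← Finset.sum_congr rfl (fun y _ => key y)]
  exact h1

lemma goodW_mul_pp {W} (i j : Fin n) (h : GoodW a b c W) :
    GoodW a b c (fun y => (sp' (y i) * sp' (y j)) * W y) := by
  intro α β γ δ hβ
  have h1 := h α β (fun l => (γ l + if l = i then 1 else 0) + if l = j then 1 else 0) δ hβ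
  have key : ∀ y : Fin n → F4, Obs a b c y *
      mono α β (fun l => (γ l + if l = i then 1 else 0) + if l = j then 1 else 0) δ y * W y
      = Obs a b c y * mono α β γ δ y * ((sp' (y i) * sp' (y j)) * W y) := by
    intro y
    simp only [mono_eq, prod_pow_shift]
    ring
  rw [← Finset.sum_congr rfl (fun y _ => key y)]
  exact h1

lemma goodW_mul_mm {W} (i j : Fin n) (h : GoodW a b c W) :
    GoodW a b c (fun y => (sm' (y i) * sm' (y j)) * W y) := by
  intro α β γ δ hβ
  have h1 := h α β γ (fun l => (δ l + if l = i then 1 else 0) + if l = j then 1 else 0) hβ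
  have key : ∀ y : Fin n → F4, Obs a b c y *
      mono α β γ (fun l => (δ l + if l = i then 1 else 0) + if l = j then 1 else 0) y * W y
      = Obs a b c y * mono α β γ δ y * ((sm' (y i) * sm' (y j)) * W y) := by
    intro y
    simp only [mono_eq, prod_pow_shift]
    ring
  rw [← Finset.sum_congr rfl (fun y _ => key y)]
  exact h1

lemma goodW_mul_P {W} (i : Fin n) (h : GoodW a b c W) :
    GoodW a b c (fun y => sP (y i) * W y) := by
  intro α β γ δ hβ
  have h1 := h (fun l => α l + if l = i then 1 else 0) β γ δ hβ
  have key : ∀ y : Fin n → F4, Obs a b c y *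
      mono (fun l => α l + if l = i then 1 else 0) β γ δ y * W y
      = Obs a b c y * mono α β γ δ y * (sP (y i) * W y) := by
    intro y
    simp only [mono_eq, prod_pow_shift]
    ring
  rw [← Finset.sum_congr rfl (fun y _ => key y)]
  exact h1

lemma goodW_mul_X {W} (f : Phi n) (h : GoodW a b c W) :
    GoodW a b c (fun y => Xf f y * W y) := by
  rcases f with ⟨⟨i, j⟩, k⟩ | i
  · fin_cases k <;> simp only [Xf] <;> norm_num
    · exact goodW_mul_PP i j h
    · exact goodW_mul_MM i j h
    · exact goodW_mul_pp i j h
    · exact goodW_mul_mm i j h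
  · exact goodW_mul_P i h

lemma goodW_mul_X_pow {W} (f : Phi n) (k : ℕ) (h : GoodW a b c W) :
    GoodW a b c (fun y => Xf f y ^ k * W y) := by
  induction k with
  | zero => simpa using h
  | succ k ih =>
    have h2 := goodW_mul_X f ih
    have : ∀ y : Fin n → F4, Xf f y * (Xf f y ^ k * W y) = Xf f y ^ (k+1) * W y := by
      intro y; ring
    intro α β γ δ hβ
    have h3 := h2 α β γ δ hβ
    simp only [this] at h3
    exact h3

lemma goodW_mul_binom {W} (f : Phi n) (e : ℝ) (he : 0 ≤ e) (m : ℕ) (h : GoodW a b c W) :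
    GoodW a b c (fun y => (1 + e * Xf f y) ^ m * W y) := by
  have expand : ∀ y : Fin n → F4, (1 + e * Xf f y) ^ m * W y
      = ∑ k ∈ Finset.range (m+1),
          ((e ^ k * (m.choose k : ℝ)) * (Xf f y ^ k * W y)) := by
    intro y
    rw [add_comm (1:ℝ), add_pow]
    rw [Finset.sum_mul]
    apply Finset.sum_congr rfl
    intro k _
    rw [mul_pow]
    ring
  have hg : GoodW a b c (fun y => ∑ k ∈ Finset.range (m+1),
      ((e ^ k * (m.choose k : ℝ)) * (Xf f y ^ k * W y))) := by
    apply goodW_sum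
    intro k _
    exact goodW_smul _ (by positivity) (goodW_mul_X_pow f k h)
  intro α β γ δ hβ
  have h3 := hg α β γ δ hβ
  simp only [← expand] at h3
  exact h3

lemma goodW_prod (cK : Phi n → ℝ) (hc : ∀ f, 0 ≤ cK f) (m : ℕ) (s : Finset (Phi n)) :
    GoodW a b c (fun y => ∏ f ∈ s, (1 + (cK f / m) * Xf f y) ^ m) := by
  classical
  induction s using Finset.induction_on with
  | empty => simpa using (goodW_one (a := a) (b := b) (c := c))
  | @insert f s' hf ih =>
    have h2 := goodW_mul_binom f (cK f / m) (div_nonneg (hc f) (Nat.cast_nonneg m)) m ih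
    intro α β γ δ hβ
    have h3 := h2 α β γ δ hβ
    have : ∀ y : Fin n → F4, (1 + cK f / m * Xf f y) ^ m *
        (∏ f' ∈ s', (1 + cK f' / m * Xf f' y) ^ m)
        = ∏ f' ∈ insert f s', (1 + cK f' / m * Xf f' y) ^ m := by
      intro y; rw [Finset.prod_insert hf]
    simp only [this] at h3
    exact h3

theorem core_S_nonpos (cK : Phi n → ℝ) (hc : ∀ f, 0 ≤ cK f) :
    ∑ y : Fin n → F4, Obs a b c y * Real.exp (∑ f : Phi n, cK f * Xf f y) ≤ 0 := by
  have hm : ∀ m : ℕ, ∑ y : Fin n → F4,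
      Obs a b c y * ∏ f : Phi n, (1 + (cK f / m) * Xf f y) ^ m ≤ 0 := by
    intro m
    have h1 := goodW_prod (a := a) (b := b) (c := c) cK hc m Finset.univ
      (fun _ => 0) (fun _ => 0) (fun _ => 0) (fun _ => 0) (by simp)
    have : ∀ y : Fin n → F4, Obs a b c y * mono (fun _ => 0) (fun _ => 0) (fun _ => 0)
        (fun _ => 0) y * (∏ f : Phi n, (1 + cK f / m * Xf f y) ^ m)
        = Obs a b c y * ∏ f : Phi n, (1 + cK f / m * Xf f y) ^ m := by
      intro y
      simp [mono]
    simp only [this] at h1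
    exact h1
  have hlim : Tendsto (fun m : ℕ => ∑ y : Fin n → F4,
      Obs a b c y * ∏ f : Phi n, (1 + (cK f / m) * Xf f y) ^ m) atTop
      (nhds (∑ y : Fin n → F4, Obs a b c y * Real.exp (∑ f : Phi n, cK f * Xf f y))) := by
    apply tendsto_finset_sum
    intro y _
    have : Real.exp (∑ f : Phi n, cK f * Xf f y) = ∏ f : Phi n, Real.exp (cK f * Xf f y) :=
      Real.exp_sum _ _
    rw [this]
    apply Tendsto.const_mul
    apply tendsto_finset_prod
    intro f _
    have h4 := Real.tendsto_one_add_div_pow_exp (cK f * Xf f y)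
    have : ∀ m : ℕ, 1 + cK f * Xf f y / m = 1 + (cK f / m) * Xf f y := by
      intro m; ring
    simpa [this] using h4
  exact le_of_tendsto hlim (Filter.Eventually.of_forall hm)
end Factors

section Model
variable {n : ℕ} (K : Fin n → Fin n → ℝ) (hh : Fin n → ℝ)

noncomputable def Hf (τ : Fin n → Fin 2) : ℝ :=
  (∑ i, ∑ j, if i < j then K i j * (chi (τ i) * chi (τ j)) else 0) + ∑ i, hh i * chi (τ i)

noncomputable def vw (τ : Fin n → Fin 2) : ℝ := Real.exp (Hf K hh τ)

noncomputable def cK : Phi n → ℝ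
  | Sum.inl ((i, j), _) => if i < j then K i j else 0
  | Sum.inr i => 2 * hh i

lemma cK_nonneg (hK : ∀ i j, 0 ≤ K i j) (hhn : ∀ i, 0 ≤ hh i) : ∀ f, 0 ≤ cK K hh f := by
  intro f
  rcases f with ⟨⟨i, j⟩, k⟩ | i
  · simp only [cK]; split
    · exact hK i j
    · exact le_refl 0
  · simp only [cK]; linarith [hhn i]

lemma ID1 (y : Fin n → F4) :
    (∑ f : Phi n, cK K hh f * Xf f y) =
      Hf K hh (fun i => (y i).1) + Hf K hh (fun i => (y i).2.1)
      + Hf K hh (fun i => (y i).2.2.1) + Hf K hh (fun i => (y i).2.2.2) := by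
  rw [Fintype.sum_sum_type, Fintype.sum_prod_type]
  have hinl : ∀ p : Fin n × Fin n, (∑ k : Fin 4, cK K hh (Sum.inl (p, k)) * Xf (Sum.inl (p, k)) y)
      = (if p.1 < p.2 then K p.1 p.2 * (chi ((y p.1).1) * chi ((y p.2).1)) else 0)
      + (if p.1 < p.2 then K p.1 p.2 * (chi ((y p.1).2.1) * chi ((y p.2).2.1)) else 0)
      + (if p.1 < p.2 then K p.1 p.2 * (chi ((y p.1).2.2.1) * chi ((y p.2).2.2.1)) else 0)
      + (if p.1 < p.2 then K p.1 p.2 * (chi ((y p.1).2.2.2) * chi ((y p.2).2.2.2)) else 0) := by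
    intro p
    rw [Fin.sum_univ_four]
    simp only [cK, Xf,
      show ((1:Fin 4) = 0) = False from by decide, show ((2:Fin 4) = 0) = False from by decide,
      show ((2:Fin 4) = 1) = False from by decide, show ((3:Fin 4) = 0) = False from by decide,
      show ((3:Fin 4) = 1) = False from by decide, show ((3:Fin 4) = 2) = False from by decide,
      if_true, if_false, eq_self_iff_true]
    split
    · unfold sP sM sp' sm'; ring
    · simp
  rw [Finset.sum_congr rfl (fun p _ => hinl p)]
  have hinr : ∀ i : Fin n, cK K hh (Sum.inr i) * Xf (Sum.inr i) y
      = hh i * chi ((y i).1) + hh i * chi ((y i).2.1)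
      + hh i * chi ((y i).2.2.1) + hh i * chi ((y i).2.2.2) := by
    intro i
    simp only [cK, Xf]
    unfold sP
    ring
  rw [Finset.sum_congr rfl (fun i _ => hinr i)]
  unfold Hf
  rw [Fintype.sum_prod_type]
  simp only [Finset.sum_add_distrib]
  ring

end Model

section Moments
variable {n : ℕ} (K : Fin n → Fin n → ℝ) (hh : Fin n → ℝ)

noncomputable def zZ : ℝ := ∑ τ : Fin n → Fin 2, vw K hh τ
noncomputable def m1 (s : Fin n) : ℝ := ∑ τ : Fin n → Fin 2, chi (τ s) * vw K hh τ
noncomputable def m2 (s t : Fin n) : ℝ :=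
  ∑ τ : Fin n → Fin 2, chi (τ s) * chi (τ t) * vw K hh τ
noncomputable def m3 (s t u : Fin n) : ℝ :=
  ∑ τ : Fin n → Fin 2, chi (τ s) * chi (τ t) * chi (τ u) * vw K hh τ

lemma sum2_prod (f g : (Fin n → Fin 2) → ℝ) :
    ∑ u : Fin n → Fin 2, ∑ w : Fin n → Fin 2, f u * g w = (∑ u, f u) * (∑ w, g w) := by
  rw [Finset.sum_mul_sum]

lemma cov_split {κ : Type*} [Fintype κ] (A B W : κ → ℝ) :
    ∑ p : κ, ∑ q : κ, (A p - A q) * (B p - B q) * (W p * W q)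
      = 2 * ((∑ p, A p * B p * W p) * (∑ p, W p) - (∑ p, A p * W p) * (∑ p, B p * W p)) := by
  have key : ∀ p q : κ, (A p - A q) * (B p - B q) * (W p * W q)
      = (A p * B p * W p) * W q - (A p * W p) * (B q * W q)
        - (B p * W p) * (A q * W q) + W p * (A q * B q * W q) := by
    intro p q; ring
  simp only [key]
  simp only [Finset.sum_add_distrib, Finset.sum_sub_distrib, ← Finset.mul_sum, ← Finset.sum_mul]
  ring

def e4 {n : ℕ} : ((Fin n → Fin 2) × (Fin n → Fin 2) × (Fin n → Fin 2) × (Fin n → Fin 2))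
    ≃ (Fin n → F4) where
  toFun x := fun i => (x.1 i, x.2.1 i, x.2.2.1 i, x.2.2.2 i)
  invFun y := (fun i => (y i).1, fun i => (y i).2.1, fun i => (y i).2.2.1, fun i => (y i).2.2.2)
  left_inv := fun x => rfl
  right_inv := fun y => rfl

variable (a b c : Fin n)

noncomputable def Af (u w : Fin n → Fin 2) : ℝ :=
  ((chi (u a) - chi (w a))/2) * ((chi (u b) - chi (w b))/2)
noncomputable def Bf (u w : Fin n → Fin 2) : ℝ := (chi (u c) + chi (w c))/2

lemma SB_eq : ∑ u : Fin n → Fin 2, ∑ w : Fin n → Fin 2, Bf c u w * (vw K hh u * vw K hh w)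
    = m1 K hh c * zZ K hh := by
  have key : ∀ u w : Fin n → Fin 2, Bf c u w * (vw K hh u * vw K hh w)
      = (1/2) * ((chi (u c) * vw K hh u) * vw K hh w) +
        (1/2) * (vw K hh u * (chi (w c) * vw K hh w)) := by
    intro u w; unfold Bf; ring
  simp only [key]
  simp only [Finset.sum_add_distrib, ← Finset.mul_sum, ← Finset.sum_mul]
  unfold m1 zZ
  ring

lemma SA_eq : ∑ u : Fin n → Fin 2, ∑ w : Fin n → Fin 2, Af a b u w * (vw K hh u * vw K hh w)
    = (1/2) * (m2 K hh a b * zZ K hh - m1 K hh a * m1 K hh b) := by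
  have key : ∀ u w : Fin n → Fin 2, Af a b u w * (vw K hh u * vw K hh w)
      = (1/4) * ((chi (u a) * chi (u b) * vw K hh u) * vw K hh w)
        - (1/4) * ((chi (u a) * vw K hh u) * (chi (w b) * vw K hh w))
        - (1/4) * ((chi (u b) * vw K hh u) * (chi (w a) * vw K hh w))
        + (1/4) * (vw K hh u * (chi (w a) * chi (w b) * vw K hh w)) := by
    intro u w; unfold Af; ring
  simp only [key]
  simp only [Finset.sum_add_distrib, Finset.sum_sub_distrib, ← Finset.mul_sum, ← Finset.sum_mul]
  unfold m1 m2 zZ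
  ring

lemma SAB_eq : ∑ u : Fin n → Fin 2, ∑ w : Fin n → Fin 2,
    Af a b u w * Bf c u w * (vw K hh u * vw K hh w)
    = (1/4) * (zZ K hh * m3 K hh a b c + m2 K hh a b * m1 K hh c
        - m2 K hh a c * m1 K hh b - m1 K hh a * m2 K hh b c) := by
  have key : ∀ u w : Fin n → Fin 2, Af a b u w * Bf c u w * (vw K hh u * vw K hh w)
      = (1/8) * ((chi (u a) * chi (u b) * chi (u c) * vw K hh u) * vw K hh w)
        + (1/8) * ((chi (u a) * chi (u b) * vw K hh u) * (chi (w c) * vw K hh w))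
        - (1/8) * ((chi (u a) * chi (u c) * vw K hh u) * (chi (w b) * vw K hh w))
        - (1/8) * ((chi (u a) * vw K hh u) * (chi (w b) * chi (w c) * vw K hh w))
        - (1/8) * ((chi (u b) * chi (u c) * vw K hh u) * (chi (w a) * vw K hh w))
        - (1/8) * ((chi (u b) * vw K hh u) * (chi (w a) * chi (w c) * vw K hh w))
        + (1/8) * ((chi (u c) * vw K hh u) * (chi (w a) * chi (w b) * vw K hh w))
        + (1/8) * (vw K hh u * (chi (w a) * chi (w b) * chi (w c) * vw K hh w)) := by
    intro u w; unfold Af Bf; ring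
  simp only [key]
  simp only [Finset.sum_add_distrib, Finset.sum_sub_distrib, ← Finset.mul_sum, ← Finset.sum_mul]
  unfold m1 m2 m3 zZ
  ring

lemma SZ_eq : ∑ u : Fin n → Fin 2, ∑ w : Fin n → Fin 2, (vw K hh u * vw K hh w)
    = zZ K hh * zZ K hh := by
  rw [sum2_prod]; rfl

theorem S_moments :
    ∑ y : Fin n → F4, Obs a b c y * Real.exp (∑ f : Phi n, cK K hh f * Xf f y)
    = zZ K hh * (zZ K hh ^ 2 * m3 K hh a b c
        - zZ K hh * (m2 K hh a b * m1 K hh c)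
        - zZ K hh * (m2 K hh a c * m1 K hh b)
        - zZ K hh * (m2 K hh b c * m1 K hh a)
        + 2 * (m1 K hh a * m1 K hh b * m1 K hh c)) := by
  have step1 : ∀ y : Fin n → F4, Obs a b c y * Real.exp (∑ f : Phi n, cK K hh f * Xf f y)
      = Obs a b c y * (vw K hh (fun i => (y i).1) * vw K hh (fun i => (y i).2.1)
          * vw K hh (fun i => (y i).2.2.1) * vw K hh (fun i => (y i).2.2.2)) := by
    intro y
    rw [ID1]
    unfold vw
    rw [Real.exp_add, Real.exp_add, Real.exp_add]
  simp only [step1]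
  rw [← Equiv.sum_comp (e4 (n := n)) (fun y => Obs a b c y *
      (vw K hh (fun i => (y i).1) * vw K hh (fun i => (y i).2.1)
        * vw K hh (fun i => (y i).2.2.1) * vw K hh (fun i => (y i).2.2.2)))]
  rw [Fintype.sum_prod_type]
  simp only [Fintype.sum_prod_type]
  simp only [e4, Equiv.coe_fn_mk]
  have obseq : ∀ x1 x2 x3 x4 : Fin n → Fin 2,
      Obs a b c (fun i => (x1 i, x2 i, x3 i, x4 i)) *
        (vw K hh x1 * vw K hh x2 * vw K hh x3 * vw K hh x4)
      = 2 * ((Af a b x1 x2 - Af a b x3 x4) * (Bf c x1 x2 - Bf c x3 x4)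
          * ((vw K hh x1 * vw K hh x2) * (vw K hh x3 * vw K hh x4))) := by
    intro x1 x2 x3 x4
    simp only [Obs, Af, Bf, sp', sm', sM]
    ring
  simp only [obseq]
  -- now reduce to covariance over pair space
  have hpair : ∑ x1 : Fin n → Fin 2, ∑ x2 : Fin n → Fin 2, ∑ x3 : Fin n → Fin 2,
      ∑ x4 : Fin n → Fin 2, 2 * ((Af a b x1 x2 - Af a b x3 x4) * (Bf c x1 x2 - Bf c x3 x4)
          * ((vw K hh x1 * vw K hh x2) * (vw K hh x3 * vw K hh x4)))
      = 2 * ∑ p : (Fin n → Fin 2) × (Fin n → Fin 2),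
          ∑ q : (Fin n → Fin 2) × (Fin n → Fin 2),
          (Af a b p.1 p.2 - Af a b q.1 q.2) * (Bf c p.1 p.2 - Bf c q.1 q.2)
            * ((vw K hh p.1 * vw K hh p.2) * (vw K hh q.1 * vw K hh q.2)) := by
    simp only [Fintype.sum_prod_type]
    rw [Finset.mul_sum]
    apply Finset.sum_congr rfl; intro x1 _
    rw [Finset.mul_sum]
    apply Finset.sum_congr rfl; intro x2 _
    rw [Finset.mul_sum]
    apply Finset.sum_congr rfl; intro x3 _
    rw [Finset.mul_sum]
  rw [hpair]
  have hcov := cov_split (κ := (Fin n → Fin 2) × (Fin n → Fin 2))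
    (fun p => Af a b p.1 p.2) (fun p => Bf c p.1 p.2)
    (fun p => vw K hh p.1 * vw K hh p.2)
  rw [hcov]
  have h1 : ∑ p : (Fin n → Fin 2) × (Fin n → Fin 2),
      Af a b p.1 p.2 * Bf c p.1 p.2 * (vw K hh p.1 * vw K hh p.2)
      = (1/4) * (zZ K hh * m3 K hh a b c + m2 K hh a b * m1 K hh c
        - m2 K hh a c * m1 K hh b - m1 K hh a * m2 K hh b c) := by
    rw [Fintype.sum_prod_type]; exact SAB_eq K hh a b c
  have h2 : ∑ p : (Fin n → Fin 2) × (Fin n → Fin 2),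
      Af a b p.1 p.2 * (vw K hh p.1 * vw K hh p.2)
      = (1/2) * (m2 K hh a b * zZ K hh - m1 K hh a * m1 K hh b) := by
    rw [Fintype.sum_prod_type]; exact SA_eq K hh a b
  have h3 : ∑ p : (Fin n → Fin 2) × (Fin n → Fin 2),
      Bf c p.1 p.2 * (vw K hh p.1 * vw K hh p.2)
      = m1 K hh c * zZ K hh := by
    rw [Fintype.sum_prod_type]; exact SB_eq K hh c
  have h4 : ∑ p : (Fin n → Fin 2) × (Fin n → Fin 2), (vw K hh p.1 * vw K hh p.2)
      = zZ K hh * zZ K hh := by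
    rw [Fintype.sum_prod_type]; exact SZ_eq K hh
  rw [h1, h2, h3, h4]
  ring

end Moments

section Ghost
variable {N : ℕ} (J : Fin (N+1) → Fin (N+1) → ℝ)

noncomputable def Kg : Fin N → Fin N → ℝ := fun i j => J i.succ j.succ / 2
noncomputable def hG : Fin N → ℝ := fun i => J 0 i.succ / 2

noncomputable def Cst : ℝ :=
  (∑ i : Fin N, ∑ j : Fin N, if i < j then J i.succ j.succ / 2 else 0) + ∑ j : Fin N, J 0 j.succ / 2

lemma addFact : ∀ x y : Fin 2, x + (x + y) = y := by decide

def Eg : (Fin 2 × (Fin N → Fin 2)) ≃ (Fin (N+1) → Fin 2) where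
  toFun x := fun i => Fin.cases x.1 (fun j => x.1 + x.2 j) i
  invFun σ := (σ 0, fun j => σ 0 + σ j.succ)
  left_inv := by
    rintro ⟨ε, τ⟩
    apply Prod.ext
    · simp
    · funext j
      simp [addFact]
  right_inv := by
    intro σ
    funext i
    induction i using Fin.cases with
    | zero => simp
    | succ j => simp [addFact]

lemma EgZero (ε : Fin 2) (τ : Fin N → Fin 2) : Eg (ε, τ) 0 = ε := rfl

lemma EgSucc (ε : Fin 2) (τ : Fin N → Fin 2) (j : Fin N) : Eg (ε, τ) j.succ = ε + τ j := by
  simp [Eg]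

lemma kd_gh1 (ε x : Fin 2) : kd ε (ε + x) = (1 + chi x)/2 := by
  fin_cases ε <;> fin_cases x <;> norm_num [kd, chi] <;> decide

lemma kd_gh2 (ε x y : Fin 2) : kd (ε + x) (ε + y) = (1 + chi x * chi y)/2 := by
  fin_cases ε <;> fin_cases x <;> fin_cases y <;> norm_num [kd, chi] <;> decide

lemma Htrans (ε : Fin 2) (τ : Fin N → Fin 2) :
    (∑ p : Fin (N+1) × Fin (N+1),
        if p.1 < p.2 then J p.1 p.2 * kd (Eg (ε,τ) p.1) (Eg (ε,τ) p.2) else 0)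
    = Cst J + Hf (Kg J) (hG J) τ := by
  rw [Fintype.sum_prod_type, Fin.sum_univ_succ]
  have h0 : ∑ j : Fin (N+1), (if (0:Fin (N+1)) < j then J 0 j * kd (Eg (ε,τ) 0) (Eg (ε,τ) j) else 0)
      = ∑ j : Fin N, (J 0 j.succ / 2 + (J 0 j.succ / 2) * chi (τ j)) := by
    rw [Fin.sum_univ_succ]
    rw [if_neg (lt_irrefl _)]
    rw [zero_add]
    apply Finset.sum_congr rfl
    intro j _
    rw [if_pos (Fin.succ_pos j), EgZero, EgSucc, kd_gh1]
    ring
  have hs : ∀ i : Fin N, (∑ j : Fin (N+1),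
      if i.succ < j then J i.succ j * kd (Eg (ε,τ) i.succ) (Eg (ε,τ) j) else 0)
      = ∑ j : Fin N, ((if i < j then J i.succ j.succ / 2 else 0)
          + (if i < j then (J i.succ j.succ / 2) * (chi (τ i) * chi (τ j)) else 0)) := by
    intro i
    rw [Fin.sum_univ_succ]
    rw [if_neg (by exact fun hcon => (Fin.not_lt_zero _ hcon))]
    rw [zero_add]
    apply Finset.sum_congr rfl
    intro j _
    simp only [Fin.succ_lt_succ_iff]
    by_cases hij : i < j
    · rw [if_pos hij, if_pos hij, if_pos hij, EgSucc, EgSucc, kd_gh2]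
      ring
    · rw [if_neg hij, if_neg hij, if_neg hij]
      ring
  rw [h0, Finset.sum_congr rfl (fun i _ => hs i)]
  simp only [Finset.sum_add_distrib]
  unfold Cst Hf Kg hG
  ring
end Ghost

section Ghost2
variable {N : ℕ} (J : Fin (N+1) → Fin (N+1) → ℝ)

noncomputable def Hgh (σ : Fin (N+1) → Fin 2) : ℝ :=
  Real.exp (∑ p : Fin (N+1) × Fin (N+1), if p.1 < p.2 then J p.1 p.2 * kd (σ p.1) (σ p.2) else 0)

lemma transfer (g : (Fin (N+1) → Fin 2) → ℝ) (g' : (Fin N → Fin 2) → ℝ)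
    (hgg : ∀ ε τ, g (Eg (ε, τ)) = g' τ) :
    ∑ σ : Fin (N+1) → Fin 2, g σ * Hgh J σ
      = 2 * (Real.exp (Cst J) * ∑ τ : Fin N → Fin 2, g' τ * vw (Kg J) (hG J) τ) := by
  rw [← Equiv.sum_comp (Eg (N := N)) (fun σ => g σ * Hgh J σ)]
  rw [Fintype.sum_prod_type, Fin.sum_univ_two]
  have key : ∀ ε τ, g (Eg (ε, τ)) * Hgh J (Eg (ε, τ))
      = Real.exp (Cst J) * (g' τ * vw (Kg J) (hG J) τ) := by
    intro ε τ
    unfold Hgh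
    rw [Htrans, Real.exp_add, hgg]
    unfold vw
    ring
  simp only [key]
  rw [← Finset.mul_sum]
  ring

end Ghost2

theorem U1_nonpos {n : ℕ} (K : Fin n → Fin n → ℝ) (hh : Fin n → ℝ)
    (hK : ∀ i j, 0 ≤ K i j) (hhn : ∀ i, 0 ≤ hh i) (a b c : Fin n) :
    zZ K hh ^ 2 * m3 K hh a b c
      - zZ K hh * (m2 K hh a b * m1 K hh c)
      - zZ K hh * (m2 K hh a c * m1 K hh b)
      - zZ K hh * (m2 K hh b c * m1 K hh a)
      + 2 * (m1 K hh a * m1 K hh b * m1 K hh c) ≤ 0 := by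
  have hS := core_S_nonpos (a := a) (b := b) (c := c) (cK K hh) (cK_nonneg K hh hK hhn)
  rw [S_moments] at hS
  have hz : 0 < zZ K hh := by
    apply Finset.sum_pos (fun τ _ => Real.exp_pos _)
    exact ⟨fun _ => 0, Finset.mem_univ _⟩
  nlinarith [hz, hS]

noncomputable def DD {n : ℕ} (s : Fin n) (τ : Fin n → Fin 2) : ℝ := (1 + chi (τ s))/2

lemma kd_DD {N : ℕ} (ε : Fin 2) (τ : Fin N → Fin 2) (s : Fin N) :
    kd (Eg (ε, τ) 0) (Eg (ε, τ) s.succ) = DD s τ := by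
  rw [EgZero, EgSucc, kd_gh1]
  rfl

theorem main_aux (N : ℕ) (J : Fin (N+1) → Fin (N+1) → ℝ) (hJ : ∀ i j, 0 ≤ J i j)
    (a b c : Fin N) :
    (∑ σ : Fin (N+1) → Fin 2,
        (kd (σ 0) (σ a.succ) * kd (σ 0) (σ b.succ) * kd (σ 0) (σ c.succ)) * Hgh J σ)
      / (∑ σ : Fin (N+1) → Fin 2, Hgh J σ)
    - ((∑ σ : Fin (N+1) → Fin 2, (kd (σ 0) (σ a.succ) * kd (σ 0) (σ b.succ)) * Hgh J σ)
        / (∑ σ : Fin (N+1) → Fin 2, Hgh J σ))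
      * ((∑ σ : Fin (N+1) → Fin 2, (kd (σ 0) (σ c.succ)) * Hgh J σ)
        / (∑ σ : Fin (N+1) → Fin 2, Hgh J σ))
    - ((∑ σ : Fin (N+1) → Fin 2, (kd (σ 0) (σ a.succ) * kd (σ 0) (σ c.succ)) * Hgh J σ)
        / (∑ σ : Fin (N+1) → Fin 2, Hgh J σ))
      * ((∑ σ : Fin (N+1) → Fin 2, (kd (σ 0) (σ b.succ)) * Hgh J σ)
        / (∑ σ : Fin (N+1) → Fin 2, Hgh J σ))
    - ((∑ σ : Fin (N+1) → Fin 2, (kd (σ 0) (σ b.succ) * kd (σ 0) (σ c.succ)) * Hgh J σ)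
        / (∑ σ : Fin (N+1) → Fin 2, Hgh J σ))
      * ((∑ σ : Fin (N+1) → Fin 2, (kd (σ 0) (σ a.succ)) * Hgh J σ)
        / (∑ σ : Fin (N+1) → Fin 2, Hgh J σ))
    + 2 * ((∑ σ : Fin (N+1) → Fin 2, (kd (σ 0) (σ a.succ)) * Hgh J σ)
        / (∑ σ : Fin (N+1) → Fin 2, Hgh J σ))
      * ((∑ σ : Fin (N+1) → Fin 2, (kd (σ 0) (σ b.succ)) * Hgh J σ)
        / (∑ σ : Fin (N+1) → Fin 2, Hgh J σ))
      * ((∑ σ : Fin (N+1) → Fin 2, (kd (σ 0) (σ c.succ)) * Hgh J σ)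
        / (∑ σ : Fin (N+1) → Fin 2, Hgh J σ)) ≤ 0 := by
  have hK : ∀ i j, 0 ≤ Kg J i j := fun i j => div_nonneg (hJ _ _) (by norm_num)
  have hhn : ∀ i, 0 ≤ hG J i := fun i => div_nonneg (hJ _ _) (by norm_num)
  have hC : (0:ℝ) < Real.exp (Cst J) := Real.exp_pos _
  have hz : 0 < zZ (Kg J) (hG J) := by
    apply Finset.sum_pos (fun τ _ => Real.exp_pos _)
    exact ⟨fun _ => 0, Finset.mem_univ _⟩
  have hden := transfer J (fun _ => 1) (fun _ => 1) (fun ε τ => rfl)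
  have habc := transfer J
    (fun σ => kd (σ 0) (σ a.succ) * kd (σ 0) (σ b.succ) * kd (σ 0) (σ c.succ))
    (fun τ => DD a τ * DD b τ * DD c τ)
    (fun ε τ => by simp only [kd_DD])
  have hab := transfer J (fun σ => kd (σ 0) (σ a.succ) * kd (σ 0) (σ b.succ))
    (fun τ => DD a τ * DD b τ) (fun ε τ => by simp only [kd_DD])
  have hac := transfer J (fun σ => kd (σ 0) (σ a.succ) * kd (σ 0) (σ c.succ))
    (fun τ => DD a τ * DD c τ) (fun ε τ => by simp only [kd_DD])
  have hbc := transfer J (fun σ => kd (σ 0) (σ b.succ) * kd (σ 0) (σ c.succ))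
    (fun τ => DD b τ * DD c τ) (fun ε τ => by simp only [kd_DD])
  have ha := transfer J (fun σ => kd (σ 0) (σ a.succ)) (fun τ => DD a τ)
    (fun ε τ => by simp only [kd_DD])
  have hb := transfer J (fun σ => kd (σ 0) (σ b.succ)) (fun τ => DD b τ)
    (fun ε τ => by simp only [kd_DD])
  have hc := transfer J (fun σ => kd (σ 0) (σ c.succ)) (fun τ => DD c τ)
    (fun ε τ => by simp only [kd_DD])
  simp only [one_mul] at hden
  simp only [habc, hab, hac, hbc, ha, hb, hc, hden]
  have key : ∀ X : ℝ, (2*(Real.exp (Cst J) * X))/(2*(Real.exp (Cst J) * (zZ (Kg J) (hG J))))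
      = X / zZ (Kg J) (hG J) := by
    intro X
    rw [mul_div_mul_left _ _ (by norm_num : (2:ℝ) ≠ 0),
      mul_div_mul_left _ _ hC.ne']
  have hzZ : (∑ x : Fin N → Fin 2, vw (Kg J) (hG J) x) = zZ (Kg J) (hG J) := rfl
  rw [hzZ]
  simp only [key]
  -- moment relations
  have rabc : ∑ τ : Fin N → Fin 2, DD a τ * DD b τ * DD c τ * vw (Kg J) (hG J) τ
      = (zZ (Kg J) (hG J) + m1 (Kg J) (hG J) a + m1 (Kg J) (hG J) b + m1 (Kg J) (hG J) c + m2 (Kg J) (hG J) a b + m2 (Kg J) (hG J) a c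
          + m2 (Kg J) (hG J) b c + m3 (Kg J) (hG J) a b c)/8 := by
    have e : ∀ τ : Fin N → Fin 2, DD a τ * DD b τ * DD c τ * vw (Kg J) (hG J) τ
        = (1/8)*(vw (Kg J) (hG J) τ) + (1/8)*(chi (τ a) * vw (Kg J) (hG J) τ) + (1/8)*(chi (τ b) * vw (Kg J) (hG J) τ)
          + (1/8)*(chi (τ c) * vw (Kg J) (hG J) τ) + (1/8)*(chi (τ a) * chi (τ b) * vw (Kg J) (hG J) τ)
          + (1/8)*(chi (τ a) * chi (τ c) * vw (Kg J) (hG J) τ) + (1/8)*(chi (τ b) * chi (τ c) * vw (Kg J) (hG J) τ)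
          + (1/8)*(chi (τ a) * chi (τ b) * chi (τ c) * vw (Kg J) (hG J) τ) := by
      intro τ; unfold DD; ring
    simp only [e, Finset.sum_add_distrib, ← Finset.mul_sum]
    unfold zZ m1 m2 m3
    ring
  have rab : ∑ τ : Fin N → Fin 2, DD a τ * DD b τ * vw (Kg J) (hG J) τ
      = (zZ (Kg J) (hG J) + m1 (Kg J) (hG J) a + m1 (Kg J) (hG J) b + m2 (Kg J) (hG J) a b)/4 := by
    have e : ∀ τ : Fin N → Fin 2, DD a τ * DD b τ * vw (Kg J) (hG J) τ
        = (1/4)*(vw (Kg J) (hG J) τ) + (1/4)*(chi (τ a) * vw (Kg J) (hG J) τ) + (1/4)*(chi (τ b) * vw (Kg J) (hG J) τ)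
          + (1/4)*(chi (τ a) * chi (τ b) * vw (Kg J) (hG J) τ) := by
      intro τ; unfold DD; ring
    simp only [e, Finset.sum_add_distrib, ← Finset.mul_sum]
    unfold zZ m1 m2
    ring
  have rac : ∑ τ : Fin N → Fin 2, DD a τ * DD c τ * vw (Kg J) (hG J) τ
      = (zZ (Kg J) (hG J) + m1 (Kg J) (hG J) a + m1 (Kg J) (hG J) c + m2 (Kg J) (hG J) a c)/4 := by
    have e : ∀ τ : Fin N → Fin 2, DD a τ * DD c τ * vw (Kg J) (hG J) τ
        = (1/4)*(vw (Kg J) (hG J) τ) + (1/4)*(chi (τ a) * vw (Kg J) (hG J) τ) + (1/4)*(chi (τ c) * vw (Kg J) (hG J) τ)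
          + (1/4)*(chi (τ a) * chi (τ c) * vw (Kg J) (hG J) τ) := by
      intro τ; unfold DD; ring
    simp only [e, Finset.sum_add_distrib, ← Finset.mul_sum]
    unfold zZ m1 m2
    ring
  have rbc : ∑ τ : Fin N → Fin 2, DD b τ * DD c τ * vw (Kg J) (hG J) τ
      = (zZ (Kg J) (hG J) + m1 (Kg J) (hG J) b + m1 (Kg J) (hG J) c + m2 (Kg J) (hG J) b c)/4 := by
    have e : ∀ τ : Fin N → Fin 2, DD b τ * DD c τ * vw (Kg J) (hG J) τ
        = (1/4)*(vw (Kg J) (hG J) τ) + (1/4)*(chi (τ b) * vw (Kg J) (hG J) τ) + (1/4)*(chi (τ c) * vw (Kg J) (hG J) τ)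
          + (1/4)*(chi (τ b) * chi (τ c) * vw (Kg J) (hG J) τ) := by
      intro τ; unfold DD; ring
    simp only [e, Finset.sum_add_distrib, ← Finset.mul_sum]
    unfold zZ m1 m2
    ring
  have ra : ∑ τ : Fin N → Fin 2, DD a τ * vw (Kg J) (hG J) τ = (zZ (Kg J) (hG J) + m1 (Kg J) (hG J) a)/2 := by
    have e : ∀ τ : Fin N → Fin 2, DD a τ * vw (Kg J) (hG J) τ
        = (1/2)*(vw (Kg J) (hG J) τ) + (1/2)*(chi (τ a) * vw (Kg J) (hG J) τ) := by
      intro τ; unfold DD; ring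
    simp only [e, Finset.sum_add_distrib, ← Finset.mul_sum]
    unfold zZ m1
    ring
  have rb : ∑ τ : Fin N → Fin 2, DD b τ * vw (Kg J) (hG J) τ = (zZ (Kg J) (hG J) + m1 (Kg J) (hG J) b)/2 := by
    have e : ∀ τ : Fin N → Fin 2, DD b τ * vw (Kg J) (hG J) τ
        = (1/2)*(vw (Kg J) (hG J) τ) + (1/2)*(chi (τ b) * vw (Kg J) (hG J) τ) := by
      intro τ; unfold DD; ring
    simp only [e, Finset.sum_add_distrib, ← Finset.mul_sum]
    unfold zZ m1
    ring
  have rc : ∑ τ : Fin N → Fin 2, DD c τ * vw (Kg J) (hG J) τ = (zZ (Kg J) (hG J) + m1 (Kg J) (hG J) c)/2 := by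
    have e : ∀ τ : Fin N → Fin 2, DD c τ * vw (Kg J) (hG J) τ
        = (1/2)*(vw (Kg J) (hG J) τ) + (1/2)*(chi (τ c) * vw (Kg J) (hG J) τ) := by
      intro τ; unfold DD; ring
    simp only [e, Finset.sum_add_distrib, ← Finset.mul_sum]
    unfold zZ m1
    ring
  simp only [rabc, rab, rac, rbc, ra, rb, rc]
  have hU := U1_nonpos (Kg J) (hG J) hK hhn a b c
  have hfinal : (zZ (Kg J) (hG J) + m1 (Kg J) (hG J) a + m1 (Kg J) (hG J) b + m1 (Kg J) (hG J) c + m2 (Kg J) (hG J) a b + m2 (Kg J) (hG J) a c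
          + m2 (Kg J) (hG J) b c + m3 (Kg J) (hG J) a b c)/8 / zZ (Kg J) (hG J)
      - (zZ (Kg J) (hG J) + m1 (Kg J) (hG J) a + m1 (Kg J) (hG J) b + m2 (Kg J) (hG J) a b)/4 / zZ (Kg J) (hG J)
          * ((zZ (Kg J) (hG J) + m1 (Kg J) (hG J) c)/2 / zZ (Kg J) (hG J))
      - (zZ (Kg J) (hG J) + m1 (Kg J) (hG J) a + m1 (Kg J) (hG J) c + m2 (Kg J) (hG J) a c)/4 / zZ (Kg J) (hG J)
          * ((zZ (Kg J) (hG J) + m1 (Kg J) (hG J) b)/2 / zZ (Kg J) (hG J))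
      - (zZ (Kg J) (hG J) + m1 (Kg J) (hG J) b + m1 (Kg J) (hG J) c + m2 (Kg J) (hG J) b c)/4 / zZ (Kg J) (hG J)
          * ((zZ (Kg J) (hG J) + m1 (Kg J) (hG J) a)/2 / zZ (Kg J) (hG J))
      + 2 * ((zZ (Kg J) (hG J) + m1 (Kg J) (hG J) a)/2 / zZ (Kg J) (hG J)) * ((zZ (Kg J) (hG J) + m1 (Kg J) (hG J) b)/2 / zZ (Kg J) (hG J))
          * ((zZ (Kg J) (hG J) + m1 (Kg J) (hG J) c)/2 / zZ (Kg J) (hG J))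
      = (zZ (Kg J) (hG J) ^ 2 * m3 (Kg J) (hG J) a b c
      - zZ (Kg J) (hG J) * (m2 (Kg J) (hG J) a b * m1 (Kg J) (hG J) c)
      - zZ (Kg J) (hG J) * (m2 (Kg J) (hG J) a c * m1 (Kg J) (hG J) b)
      - zZ (Kg J) (hG J) * (m2 (Kg J) (hG J) b c * m1 (Kg J) (hG J) a)
      + 2 * (m1 (Kg J) (hG J) a * m1 (Kg J) (hG J) b * m1 (Kg J) (hG J) c)) / (8 * zZ (Kg J) (hG J) ^ 3) := by
    field_simp
    ring
  rw [hfinal]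
  apply div_nonpos_of_nonpos_of_nonneg hU
  positivity

theorem ising_ghost_ursell_nonpos (N : ℕ) (hN : 3 ≤ N)
    (J : Fin (N+1) → Fin (N+1) → ℝ) (hJ : ∀ i j, 0 ≤ J i j) :
    let H : (Fin (N+1) → Fin 2) → ℝ := fun σ =>
      Real.exp (∑ p : Fin (N+1) × Fin (N+1),
        if p.1 < p.2 then J p.1 p.2 * kd (σ p.1) (σ p.2) else 0)
    let E : ((Fin (N+1) → Fin 2) → ℝ) → ℝ := fun f =>
      (∑ σ : Fin (N+1) → Fin 2, f σ * H σ) / (∑ σ : Fin (N+1) → Fin 2, H σ)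
    let d : Fin (N+1) → (Fin (N+1) → Fin 2) → ℝ := fun i σ => kd (σ 0) (σ i)
    let i₁ : Fin (N+1) := ⟨1, by omega⟩
    let i₂ : Fin (N+1) := ⟨2, by omega⟩
    let i₃ : Fin (N+1) := ⟨3, by omega⟩
    E (fun σ => d i₁ σ * d i₂ σ * d i₃ σ)
      - E (fun σ => d i₁ σ * d i₂ σ) * E (d i₃)
      - E (fun σ => d i₁ σ * d i₃ σ) * E (d i₂)
      - E (fun σ => d i₂ σ * d i₃ σ) * E (d i₁)
      + 2 * E (d i₁) * E (d i₂) * E (d i₃) ≤ 0 := by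
  intro H E d i₁ i₂ i₃
  exact main_aux N J hJ ⟨0, by omega⟩ ⟨1, by omega⟩ ⟨2, by omega⟩
end
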